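/- Let b > 1 and 0 < f < 1 (two incoming shocks in a head-on interaction of the isentropic p-system). Then the unique B > 0 solving φ←(B) + bf·φ←(B/(bf)) + φ→(f) - f·φ←(b) = 0 satisfies B > 1 and B > bf; that is, a head-on interaction of a forward shock and a backward shock always produces an outgoing backward shock and an outgoing forward shock. -/

import Mathlib

/-!
Write `S` for the shock branch; with `e = 1/α = 2/(γ-1)` it is `√((1 - x^(-e))(x^(e+2) - 1))`.
Two properties of `S` drive the argument: `S(x)/x` is nondecreasing on `[1, ∞)`, and
`S(1/x)·x = S(x)`. Since `φ← ≤ 0` on `(0, 1]`, the interaction equation reads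
`φ←(B) + bf·φ←(B/(bf)) = f·S(b) + S(f)`.
If `B ≤ 1`, it forces `y = B/(bf) > 1` and `bf·S(y) > S(f)`, whereas
`bf·S(y) = B·S(y)/y ≤ S(1/f)·f = S(f)` because `y ≤ 1/f`.
If `B ≤ bf`, it forces `B > 1` and `S(B) > f·S(b)`, whereas `S(B) ≤ B·S(b)/b ≤ f·S(b)`
because `B < b`.
-/

open Real Set Filter Topology

/-- κ = √γ / α with α = (γ-1)/2. -/
noncomputable def kappa (γ : ℝ) : ℝ := Real.sqrt γ / ((γ - 1) / 2)

/-- The shock branch x ↦ √((1 - x^{-1/α})(x^{γ/α} - 1)), α = (γ-1)/2. -/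
noncomputable def shockPart (γ : ℝ) (x : ℝ) : ℝ :=
  Real.sqrt ((1 - x ^ (-(1 : ℝ) / ((γ - 1) / 2))) * (x ^ (γ / ((γ - 1) / 2)) - 1))

/-- Backward auxiliary function φ← : rarefaction branch κ(x-1) for x ≤ 1,
    shock branch for x ≥ 1 (they agree, with value 0, at x = 1). -/
noncomputable def phiB (γ : ℝ) (x : ℝ) : ℝ :=
  if x ≤ 1 then kappa γ * (x - 1) else shockPart γ x

/-- Forward auxiliary function φ→ : shock branch -√(...) for x ≤ 1,
    rarefaction branch κ(x-1) for x ≥ 1 (they agree, with value 0, at x = 1). -/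
noncomputable def phiF (γ : ℝ) (x : ℝ) : ℝ :=
  if x < 1 then -shockPart γ x else kappa γ * (x - 1)

noncomputable def shockFun (e x : ℝ) : ℝ := √((1 - x ^ (-e)) * (x ^ (e + 2) - 1))

theorem shockPart_eq_shockFun {γ : ℝ} (hγ : γ ≠ 1) : shockPart γ = shockFun (2 / (γ - 1)) := by
  have h : γ - 1 ≠ 0 := sub_ne_zero.2 hγ
  have h1 : -(1 : ℝ) / ((γ - 1) / 2) = -(2 / (γ - 1)) := by field_simp
  have h2 : γ / ((γ - 1) / 2) = 2 / (γ - 1) + 2 := by field_simp; ring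
  ext x
  rw [shockPart, shockFun, h1, h2]

section

variable {e x : ℝ}

theorem shockFun_div_self (hx : 0 < x) :
    shockFun e x / x = √((1 - (x ^ e)⁻¹) * (x ^ e - (x ^ 2)⁻¹)) := by
  have hx2 : x ^ (e + 2) = x ^ e * x ^ 2 := by rw [rpow_add hx, rpow_two]
  conv_lhs => arg 2; rw [← sqrt_sq hx.le]
  rw [shockFun, ← sqrt_div' _ (sq_nonneg x), rpow_neg hx.le, hx2]
  congr 1
  field_simp

theorem shockFun_inv_div_inv (hx : 0 < x) : shockFun e x⁻¹ / x⁻¹ = shockFun e x := by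
  have hx2 : x ^ (e + 2) = x ^ e * x ^ 2 := by rw [rpow_add hx, rpow_two]
  rw [shockFun_div_self (inv_pos.2 hx), shockFun, inv_rpow hx.le, rpow_neg hx.le, hx2, inv_inv]
  congr 1
  field_simp
  ring

theorem shockFun_div_self_monotoneOn (he : 0 ≤ e) :
    MonotoneOn (fun x => shockFun e x / x) (Ici 1) := by
  intro y (hy : 1 ≤ y) x (hx : 1 ≤ x) hyx
  dsimp only
  rw [shockFun_div_self (by linarith), shockFun_div_self (by linarith)]
  have hye : 1 ≤ y ^ e := one_le_rpow hy he
  have hy2 : 1 ≤ y ^ 2 := one_le_pow₀ hy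
  have hxe : y ^ e ≤ x ^ e := rpow_le_rpow (by linarith) hyx he
  gcongr
  · linarith [inv_le_one_of_one_le₀ hy2]
  · linarith [inv_le_one_of_one_le₀ (hye.trans hxe)]

theorem shockFun_pos_of_one_lt (he : 0 < e) (hx : 1 < x) : 0 < shockFun e x := by
  have hxe : 1 < x ^ e := one_lt_rpow hx he
  have hxe2 : 1 < x ^ (e + 2) := one_lt_rpow hx (by linarith)
  rw [shockFun, rpow_neg (by linarith)]
  apply sqrt_pos.2
  apply mul_pos
  · linarith [inv_lt_one_of_one_lt₀ hxe]
  · linarith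

theorem shockFun_pos (he : 0 < e) (hx0 : 0 < x) (hx : x ≠ 1) : 0 < shockFun e x := by
  rcases hx.lt_or_gt with hx1 | hx1
  · rw [← shockFun_inv_div_inv hx0]
    exact div_pos (shockFun_pos_of_one_lt he (one_lt_inv₀ hx0 |>.2 hx1)) (inv_pos.2 hx0)
  · exact shockFun_pos_of_one_lt he hx1

end

section

variable {γ x : ℝ}

theorem kappa_pos (hγ : 1 < γ) : 0 < kappa γ :=
  div_pos (sqrt_pos.2 (by linarith)) (by linarith)

theorem phiB_nonpos_of_le_one (hγ : 1 < γ) (hx : x ≤ 1) : phiB γ x ≤ 0 := by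
  rw [phiB, if_pos hx]
  exact mul_nonpos_of_nonneg_of_nonpos (kappa_pos hγ).le (by linarith)

theorem one_lt_of_phiB_pos (hγ : 1 < γ) (hx : 0 < phiB γ x) : 1 < x :=
  lt_of_not_ge fun h => (phiB_nonpos_of_le_one hγ h).not_gt hx

theorem phiB_of_one_lt (hx : 1 < x) : phiB γ x = shockPart γ x := if_neg hx.not_ge

theorem phiF_of_lt_one (hx : x < 1) : phiF γ x = -shockPart γ x := if_pos hx

end

section

variable {γ b f B : ℝ}

theorem one_lt_of_headon (hγ : 1 < γ) (hb : 1 < b) (hf0 : 0 < f) (hf1 : f < 1)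
    (h : phiB γ B + b * f * phiB γ (B / (b * f)) = f * shockPart γ b + shockPart γ f) :
    1 < B := by
  by_contra! hB
  have hbf : 0 < b * f := by positivity
  have he : 0 < 2 / (γ - 1) := div_pos two_pos (by linarith)
  rw [shockPart_eq_shockFun hγ.ne'] at h
  set S := shockFun (2 / (γ - 1))
  have hSb : 0 < f * S b := mul_pos hf0 (shockFun_pos he (by linarith) hb.ne')
  have hSf : 0 ≤ S f := sqrt_nonneg _
  have hφB := phiB_nonpos_of_le_one hγ hB
  set y := B / (b * f) with hy_def
  have hy : 1 < y := one_lt_of_phiB_pos hγ (pos_of_mul_pos_right (by linarith) hbf.le)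
  rw [phiB_of_one_lt hy, shockPart_eq_shockFun hγ.ne'] at h
  have hB0 : 0 < B := hbf.trans ((one_lt_div hbf).1 hy)
  have hyf : y ≤ f⁻¹ := by
    rw [hy_def, show f⁻¹ = b / (b * f) by field_simp]
    gcongr
    linarith
  have : b * f * S y ≤ S f := calc
    b * f * S y = B * (S y / y) := by rw [hy_def]; field_simp
    _ ≤ S y / y := mul_le_of_le_one_left (div_nonneg (sqrt_nonneg _) (by linarith)) hB
    _ ≤ S f⁻¹ / f⁻¹ := shockFun_div_self_monotoneOn he.le (mem_Ici.2 hy.le)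
      (mem_Ici.2 ((one_le_inv₀ hf0).2 hf1.le)) hyf
    _ = S f := shockFun_inv_div_inv hf0
  linarith

theorem mul_lt_of_headon (hγ : 1 < γ) (hb : 1 < b) (hf0 : 0 < f) (hf1 : f < 1)
    (h : phiB γ B + b * f * phiB γ (B / (b * f)) = f * shockPart γ b + shockPart γ f) :
    b * f < B := by
  by_contra! hB
  have hbf : 0 < b * f := by positivity
  have he : 0 < 2 / (γ - 1) := div_pos two_pos (by linarith)
  rw [shockPart_eq_shockFun hγ.ne'] at h
  set S := shockFun (2 / (γ - 1))
  have hSb : 0 ≤ S b := sqrt_nonneg _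
  have hSf : 0 < S f := shockFun_pos he hf0 hf1.ne
  have hφy : b * f * phiB γ (B / (b * f)) ≤ 0 :=
    mul_nonpos_of_nonneg_of_nonpos hbf.le (phiB_nonpos_of_le_one hγ (div_le_one_of_le₀ hB hbf.le))
  have hB1 : 1 < B := one_lt_of_phiB_pos hγ (by linarith [mul_nonneg hf0.le hSb])
  rw [phiB_of_one_lt hB1, shockPart_eq_shockFun hγ.ne'] at h
  have hBb : B ≤ b := hB.trans (mul_le_of_le_one_right (by linarith) hf1.le)
  have : S B ≤ f * S b := calc
    S B = B * (S B / B) := by field_simp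
    _ ≤ B * (S b / b) := mul_le_mul_of_nonneg_left
      (shockFun_div_self_monotoneOn he.le (mem_Ici.2 hB1.le) (mem_Ici.2 hb.le) hBb) (by linarith)
    _ ≤ b * f * (S b / b) := by gcongr
    _ = f * S b := by field_simp
  linarith

end

theorem headon_SS_general (γ : ℝ) (hγ : 1 < γ)
    (b f B : ℝ) (hb : 1 < b) (hf0 : 0 < f) (hf1 : f < 1)
    (heq : phiB γ B + b * f * phiB γ (B / (b * f)) + phiF γ f - f * phiB γ b = 0) :
    1 < B ∧ b * f < B := by
  rw [phiF_of_lt_one hf1, phiB_of_one_lt hb] at heq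
  have h : phiB γ B + b * f * phiB γ (B / (b * f)) = f * shockPart γ b + shockPart γ f := by
    linarith
  exact ⟨one_lt_of_headon hγ hb hf0 hf1 h, mul_lt_of_headon hγ hb hf0 hf1 h⟩

/-- a head-on interaction of a backward shock (b > 1) and a forward
    shock (0 < f < 1) always produces an outgoing backward shock (B > 1) and an
    outgoing forward shock (B > bf). -/
theorem headon_SS (γ : ℝ) (hγ : 1 < γ)
    (b f B : ℝ) (hb : 1 < b) (hf0 : 0 < f) (hf1 : f < 1) (hB : 0 < B)
    (heq : phiB γ B + b * f * phiB γ (B / (b * f)) + phiF γ f - f * phiB γ b = 0) :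
    1 < B ∧ b * f < B :=
  headon_SS_general γ hγ b f B hb hf0 hf1 heq
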